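/- Let λ=(λ₁,λ₂,…,λ_ℓ) be a strict partition. For every i with 1 ≤ i ≤ ℓ, the set of bar lengths in the i-th row of λ is equal to the set of shifted hook lengths in the i-th row of the shifted Young diagram S(λ). -/

import Mathlib

/-- A strict partition, encoded as a strictly decreasing list of positive integers. -/
def IsStrictPartition (l : List ℕ) : Prop :=
  List.Pairwise (· > ·) l ∧ ∀ x ∈ l, 0 < x

/-- The set of bar lengths in the (0-indexed) `i`-th row of a strict partition `l`:
`{λᵢ + λⱼ : i < j ≤ ℓ} ∪ ({1,…,λᵢ} \ {λᵢ − λⱼ : i < j ≤ ℓ})`. -/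
def barLengths (l : List ℕ) (i : ℕ) : Finset ℕ :=
  ((Finset.Ioo i l.length).image fun j => l.getD i 0 + l.getD j 0) ∪
    (Finset.Icc 1 (l.getD i 0) \
      ((Finset.Ioo i l.length).image fun j => l.getD i 0 - l.getD j 0))

/-- `l` is an `s`-bar-core: `s` is not a bar length in any row. -/
def IsBarCore (l : List ℕ) (s : ℕ) : Prop :=
  ∀ i, i < l.length → s ∉ barLengths l i

/-- The shifted hook length of the box in row `i`, column `c` (both 0-indexed, where the
`i`-th row of the shifted Young diagram occupies columns `i, …, λᵢ + i − 1`): the number of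
boxes to its right in row `i` together with itself, plus the number of boxes below it in
column `c`, plus the number of boxes of row `c + 1` if that row exists. -/
def shiftedHook (l : List ℕ) (i c : ℕ) : ℕ :=
  (l.getD i 0 + i - c) +
    ((Finset.Ioc i c).filter fun i' => c < l.getD i' 0 + i').card +
    l.getD (c + 1) 0

/-- `l` is an `s`-CSYD: no shifted hook length of the shifted Young diagram `S(λ)`
is divisible by `s`. -/
def IsCSYD (l : List ℕ) (s : ℕ) : Prop :=
  ∀ i c, i < l.length → i ≤ c → c < l.getD i 0 + i → ¬ s ∣ shiftedHook l i c

/-- The `i`-th part (0-indexed) of the doubled distinct partition `λλ`, read off from the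
Frobenius symbol `(λ₁,…,λ_ℓ ; λ₁−1,…,λ_ℓ−1)`: for `i < ℓ` the part is `λᵢ + i + 1`
(1-indexed: `λᵢ + i`), and for `ℓ ≤ i` the part is determined by the column lengths
`λⱼ + j − 1` (1-indexed). -/
def ddPart (l : List ℕ) (i : ℕ) : ℕ :=
  if i < l.length then l.getD i 0 + i + 1
  else ((Finset.range l.length).filter fun j => i + 1 ≤ l.getD j 0 + j).card

/-- The doubled distinct partition `λλ` of a strict partition `l`, as a list of parts. -/
def doubledDistinct (l : List ℕ) : List ℕ :=
  (List.range (l.getD 0 0)).map (ddPart l)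

/-- Ordinary hook length of the box in row `i`, column `j` (0-indexed) of a partition `m`. -/
def hookLen (m : List ℕ) (i j : ℕ) : ℕ :=
  (m.getD i 0 - j) + ((Finset.Ioo i m.length).filter fun i' => j < m.getD i' 0).card

/-- `m` is an `s`-core: no hook length is divisible by `s`. -/
def IsCore (m : List ℕ) (s : ℕ) : Prop :=
  ∀ i j, i < m.length → j < m.getD i 0 → ¬ s ∣ hookLen m i j

/-- NE lattice paths from `(0,0)` to `(a,b)`, encoded as lists of steps where
`false` is an east step `E = (1,0)` and `true` is a north step `N = (0,1)`. -/
def NEPaths (a b : ℕ) : Set (List Bool) :=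
  {w | w.count false = a ∧ w.count true = b}

/-- A step of a free Motzkin path. -/
inductive MStep : Type
  | U : MStep
  | F : MStep
  | D : MStep
deriving DecidableEq

/-- The height change of a step: `U = (1,1)`, `F = (1,0)`, `D = (1,−1)`. -/
def MStep.ht : MStep → ℤ
  | .U => 1
  | .F => 0
  | .D => -1

/-- Free Motzkin paths of type `(p,q)`: lattice paths from `(0,0)` to `(p,q)` with steps
`U = (1,1)`, `F = (1,0)` and `D = (1,−1)`, encoded as lists of steps. -/
def FreeMotzkin (p : ℕ) (q : ℤ) : Set (List MStep) :=
  {w | w.length = p ∧ (w.map MStep.ht).sum = q}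

/-- `multinom n a b c = n! / (a! · b! · c!)`. -/
def multinom (n a b c : ℕ) : ℕ :=
  n.factorial / (a.factorial * b.factorial * c.factorial)

lemma sp_getD_pos {l : List ℕ} (hl : IsStrictPartition l) {j : ℕ} (hj : j < l.length) :
    0 < l.getD j 0 := by
  rw [List.getD_eq_getElem l 0 hj]
  exact hl.2 _ (l.getElem_mem hj)

lemma sp_getD_lt {l : List ℕ} (hl : IsStrictPartition l) {a b : ℕ} (hab : a < b)
    (hb : b < l.length) : l.getD b 0 < l.getD a 0 := by
  have ha : a < l.length := lt_trans hab hb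
  rw [List.getD_eq_getElem l 0 hb, List.getD_eq_getElem l 0 ha]
  have := hl.1.rel_get_of_lt (a := ⟨a, ha⟩) (b := ⟨b, hb⟩) hab
  simpa [List.get_eq_getElem] using this

lemma sp_beta_mono {l : List ℕ} (hl : IsStrictPartition l) :
    ∀ b a : ℕ, a ≤ b → b < l.length → l.getD b 0 + b ≤ l.getD a 0 + a := by
  intro b
  induction b with
  | zero =>
    intro a hab _
    obtain rfl := Nat.le_zero.mp hab
    exact le_refl _
  | succ b ih =>
    intro a hab hb
    rcases Nat.eq_or_lt_of_le hab with rfl | h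
    · exact le_refl _
    · have h1 := ih a (by omega) (by omega)
      have h2 := sp_getD_lt hl (show b < b + 1 by omega) (show b + 1 < l.length by omega)
      omega

lemma hookA {l : List ℕ} (hl : IsStrictPartition l) {i c : ℕ} (hic : i ≤ c)
    (hc : c < l.length) : shiftedHook l i c = l.getD i 0 + l.getD (c + 1) 0 := by
  have hfull : (Finset.Ioc i c).filter (fun i' => c < l.getD i' 0 + i') = Finset.Ioc i c := by
    apply Finset.filter_true_of_mem
    intro x hx
    rw [Finset.mem_Ioc] at hx
    have h1 := sp_beta_mono hl c x hx.2 hc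
    have h2 := sp_getD_pos hl hc
    omega
  have hci : c ≤ l.getD i 0 + i := by
    have h1 := sp_beta_mono hl c i hic hc
    have h2 := sp_getD_pos hl hc
    omega
  rw [shiftedHook, hfull, Nat.card_Ioc]
  omega

lemma hookB {l : List ℕ} {i c : ℕ} (hc : l.length ≤ c) :
    shiftedHook l i c = (l.getD i 0 + i - c) +
      ((Finset.Ioo i l.length).filter fun j => c < l.getD j 0 + j).card := by
  have h0 : l.getD (c + 1) 0 = 0 := List.getD_eq_default _ _ (by omega)
  have hset : (Finset.Ioc i c).filter (fun j => c < l.getD j 0 + j)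
      = (Finset.Ioo i l.length).filter (fun j => c < l.getD j 0 + j) := by
    ext a
    simp only [Finset.mem_filter, Finset.mem_Ioc, Finset.mem_Ioo]
    constructor
    · rintro ⟨⟨h1, h2⟩, h3⟩
      refine ⟨⟨h1, ?_⟩, h3⟩
      by_contra hla
      rw [List.getD_eq_default _ _ (by omega)] at h3
      omega
    · rintro ⟨⟨h1, h2⟩, h3⟩
      exact ⟨⟨h1, by omega⟩, h3⟩
  rw [shiftedHook, hset, h0]
  omega

lemma hook_succ_lt {l : List ℕ} (hl : IsStrictPartition l) {i c : ℕ} (hi : i < l.length)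
    (hic : i ≤ c) (hcu : c + 1 < l.getD i 0 + i) :
    shiftedHook l i (c + 1) < shiftedHook l i c := by
  rcases lt_or_ge (c + 1) l.length with h | h
  · rw [hookA hl hic (by omega), hookA hl (by omega) h]
    rcases lt_or_ge (c + 2) l.length with h2 | h2
    · have := sp_getD_lt hl (show c + 1 < c + 2 by omega) (show c + 2 < l.length by omega)
      have he : l.getD (c + 1 + 1) 0 = l.getD (c + 2) 0 := by norm_num
      omega
    · have := sp_getD_pos hl h
      have he : l.getD (c + 1 + 1) 0 = 0 := List.getD_eq_default _ _ (by omega)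
      omega
  · rcases lt_or_ge c l.length with h' | h'
    · have hceq : c + 1 = l.length := by omega
      rw [hookA hl hic h', hookB h]
      have h0 : l.getD (c + 1) 0 = 0 := List.getD_eq_default _ _ (by omega)
      have hN : ((Finset.Ioo i l.length).filter fun j => (c+1) < l.getD j 0 + j).card
          ≤ l.length - i - 1 := by
        calc ((Finset.Ioo i l.length).filter fun j => (c+1) < l.getD j 0 + j).card
            ≤ (Finset.Ioo i l.length).card := Finset.card_filter_le _ _
          _ = l.length - i - 1 := by rw [Nat.card_Ioo]
      omega
    · rw [hookB h', hookB h]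
      have hsub : (Finset.Ioo i l.length).filter (fun j => c + 1 < l.getD j 0 + j)
          ⊆ (Finset.Ioo i l.length).filter (fun j => c < l.getD j 0 + j) := by
        intro x hx
        rw [Finset.mem_filter] at *
        exact ⟨hx.1, by omega⟩
      have hN := Finset.card_le_card hsub
      omega

lemma hook_lt_of_lt {l : List ℕ} (hl : IsStrictPartition l) {i : ℕ} (hi : i < l.length)
    {c₁ : ℕ} (hc₁ : i ≤ c₁) :
    ∀ c₂, c₁ < c₂ → c₂ < l.getD i 0 + i → shiftedHook l i c₂ < shiftedHook l i c₁ := by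
  intro c₂
  induction c₂ with
  | zero => omega
  | succ c ih =>
    intro h12 hc₂
    rcases Nat.eq_or_lt_of_le (Nat.succ_le_of_lt h12) with heq | hlt
    · obtain rfl : c₁ = c := by omega
      exact hook_succ_lt hl hi hc₁ hc₂
    · have h1 : shiftedHook l i (c + 1) < shiftedHook l i c :=
        hook_succ_lt hl hi (by omega) hc₂
      have h2 := ih (by omega) (by omega)
      omega

/-- For a strict partition `λ = (λ₁,…,λ_ℓ)` and each row index `i`, the set of
bar lengths in the `i`-th row of `λ` equals the set of shifted hook lengths in the `i`-th
row of the shifted Young diagram `S(λ)` (whose `i`-th row, 0-indexed, occupies the columns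
`i, …, λᵢ + i − 1`). -/
theorem barLengths_eq_shiftedHooks (l : List ℕ) (hl : IsStrictPartition l)
    (i : ℕ) (hi : i < l.length) :
    barLengths l i = (Finset.Ico i (l.getD i 0 + i)).image (shiftedHook l i) := by
  have hpos := sp_getD_pos hl hi
  -- the image is contained in the bar lengths
  have hsub : (Finset.Ico i (l.getD i 0 + i)).image (shiftedHook l i) ⊆ barLengths l i := by
    intro x hx
    rw [Finset.mem_image] at hx
    obtain ⟨c, hc, rfl⟩ := hx
    rw [Finset.mem_Ico] at hc
    rcases lt_or_ge (c + 1) l.length with h | h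
    · rw [hookA hl hc.1 (by omega)]
      exact Finset.mem_union_left _
        (Finset.mem_image.mpr ⟨c + 1, Finset.mem_Ioo.mpr ⟨by omega, h⟩, rfl⟩)
    · rcases lt_or_ge c l.length with h' | h'
      · rw [hookA hl hc.1 h', List.getD_eq_default _ _ h]
        apply Finset.mem_union_right
        rw [Finset.mem_sdiff]
        constructor
        · rw [Finset.mem_Icc]; omega
        · intro hmem
          obtain ⟨j, hj, hje⟩ := Finset.mem_image.mp hmem
          rw [Finset.mem_Ioo] at hj
          have h1 := sp_getD_pos hl hj.2
          have h2 := sp_getD_lt hl hj.1 hj.2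
          omega
      · rw [hookB h']
        apply Finset.mem_union_right
        rw [Finset.mem_sdiff]
        have hNle : ((Finset.Ioo i l.length).filter fun j => c < l.getD j 0 + j).card
            ≤ l.length - i - 1 :=
          le_trans (Finset.card_filter_le _ _) (le_of_eq (Nat.card_Ioo _ _))
        constructor
        · rw [Finset.mem_Icc]; omega
        · intro hmem
          obtain ⟨j, hj, hje⟩ := Finset.mem_image.mp hmem
          rw [Finset.mem_Ioo] at hj
          have hji := sp_getD_lt hl hj.1 hj.2
          have hjpos := sp_getD_pos hl hj.2
          rcases lt_or_ge c (l.getD j 0 + j) with hb | hb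
          · have hsubJ : Finset.Ioc i j ⊆
                (Finset.Ioo i l.length).filter fun j' => c < l.getD j' 0 + j' := by
              intro y hy
              rw [Finset.mem_Ioc] at hy
              rw [Finset.mem_filter, Finset.mem_Ioo]
              have := sp_beta_mono hl j y hy.2 hj.2
              exact ⟨⟨hy.1, by omega⟩, by omega⟩
            have hcard := Finset.card_le_card hsubJ
            rw [Nat.card_Ioc] at hcard
            omega
          · have hsubJ : ((Finset.Ioo i l.length).filter fun j' => c < l.getD j' 0 + j')
                ⊆ Finset.Ioo i j := by
              intro y hy
              rw [Finset.mem_filter, Finset.mem_Ioo] at hy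
              rw [Finset.mem_Ioo]
              refine ⟨hy.1.1, ?_⟩
              by_contra hyj
              have := sp_beta_mono hl y j (by omega) hy.1.2
              omega
            have hcard := Finset.card_le_card hsubJ
            rw [Nat.card_Ioo] at hcard
            omega
  -- cardinality of the image
  have hinj : Set.InjOn (shiftedHook l i) ↑(Finset.Ico i (l.getD i 0 + i)) := by
    intro a ha b hb hab
    simp only [Finset.coe_Ico, Set.mem_Ico] at ha hb
    by_contra hne
    rcases Nat.lt_or_ge a b with h | h
    · have := hook_lt_of_lt hl hi ha.1 b h hb.2
      omega
    · have hba : b < a := by omega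
      have := hook_lt_of_lt hl hi hb.1 a hba ha.2
      omega
  have hcardR : ((Finset.Ico i (l.getD i 0 + i)).image (shiftedHook l i)).card
      = l.getD i 0 := by
    rw [Finset.card_image_of_injOn hinj, Nat.card_Ico]
    omega
  -- cardinality bound for the bar lengths
  have hA : ((Finset.Ioo i l.length).image fun j => l.getD i 0 + l.getD j 0).card
      = l.length - i - 1 := by
    rw [Finset.card_image_of_injOn, Nat.card_Ioo]
    intro a ha b hb hab
    simp only [Finset.coe_Ioo, Set.mem_Ioo] at ha hb
    have hab' : l.getD i 0 + l.getD a 0 = l.getD i 0 + l.getD b 0 := hab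
    rcases Nat.lt_trichotomy a b with h | h | h
    · have := sp_getD_lt hl h hb.2; omega
    · exact h
    · have := sp_getD_lt hl h ha.2; omega
  have hC : ((Finset.Ioo i l.length).image fun j => l.getD i 0 - l.getD j 0).card
      = l.length - i - 1 := by
    rw [Finset.card_image_of_injOn, Nat.card_Ioo]
    intro a ha b hb hab
    simp only [Finset.coe_Ioo, Set.mem_Ioo] at ha hb
    have hab' : l.getD i 0 - l.getD a 0 = l.getD i 0 - l.getD b 0 := hab
    have h1 := sp_getD_lt hl ha.1 ha.2
    have h2 := sp_getD_lt hl hb.1 hb.2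
    rcases Nat.lt_trichotomy a b with h | h | h
    · have := sp_getD_lt hl h hb.2; omega
    · exact h
    · have := sp_getD_lt hl h ha.2; omega
  have hCsub : ((Finset.Ioo i l.length).image fun j => l.getD i 0 - l.getD j 0)
      ⊆ Finset.Icc 1 (l.getD i 0) := by
    intro x hx
    obtain ⟨j, hj, rfl⟩ := Finset.mem_image.mp hx
    rw [Finset.mem_Ioo] at hj
    have h1 := sp_getD_lt hl hj.1 hj.2
    have h2 := sp_getD_pos hl hj.2
    rw [Finset.mem_Icc]
    omega
  have hlam : l.getD (l.length - 1) 0 + (l.length - 1) ≤ l.getD i 0 + i :=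
    sp_beta_mono hl (l.length - 1) i (by omega) (by omega)
  have hlampos := sp_getD_pos hl (show l.length - 1 < l.length by omega)
  have hcardL : (barLengths l i).card ≤ l.getD i 0 := by
    rw [barLengths]
    refine le_trans (Finset.card_union_le _ _) ?_
    rw [Finset.card_sdiff_of_subset hCsub, hA, hC, Nat.card_Icc]
    omega
  exact (Finset.eq_of_subset_of_card_le hsub (by rw [hcardR]; exact hcardL)).symm
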